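/- arXiv:2509.03748 — 9 statements merged into one kernel-verified Lean document; each statement's English description precedes it below -/
import Mathlib

section
/- Let R be a division ring, c ∈ R a fixed element, and a₀, …, aₙ ∈ R. The set V ∪ {0}, where V = {y ∈ R \ {0} : Σᵢ₌₀ⁿ aᵢ y cⁱ = 0}, is a right vector subspace of R over the centralizer division subring R⁽ᶜ⁾ = {z ∈ R : zc = cz}. -/
open Finset

theorem sum_mul_mul_mul_of_commute {ι R : Type*} [Semiring R] (s : Finset ι) (a b : ι → R)
    (y z : R) (hz : ∀ i ∈ s, Commute z (b i)) :
    ∑ i ∈ s, a i * (y * z) * b i = (∑ i ∈ s, a i * y * b i) * z := by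
  rw [sum_mul]
  refine sum_congr rfl fun i hi => ?_
  rw [mul_assoc (a i * y), ← (hz i hi).eq, ← mul_assoc, ← mul_assoc]

theorem sum_mul_add_mul {ι R : Type*} [Semiring R] (s : Finset ι) (a b : ι → R) (y z : R) :
    ∑ i ∈ s, a i * (y + z) * b i = ∑ i ∈ s, a i * y * b i + ∑ i ∈ s, a i * z * b i := by
  simp only [mul_add, add_mul, sum_add_distrib]

/-- The set `V ∪ {0} = {y : ∑ aᵢ y cⁱ = 0}` is a right vector subspace of `R` over the
centralizer of `c`: it contains `0`, is closed under addition, and is closed under right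
multiplication by elements commuting with `c`. -/
theorem stmt7 {R : Type*} [DivisionRing R] (c : R) (n : ℕ) (a : Fin (n + 1) → R)
    (W : Set R) (hW : W = {y : R | ∑ i : Fin (n + 1), a i * y * c ^ (i : ℕ) = 0}) :
    (0 : R) ∈ W ∧ (∀ y ∈ W, ∀ z ∈ W, y + z ∈ W) ∧
      ∀ y ∈ W, ∀ z : R, z * c = c * z → y * z ∈ W := by
  subst hW
  refine ⟨by simp, fun y hy z hz => ?_, fun y hy z hzc => ?_⟩
  · rw [Set.mem_ofPred_eq, sum_mul_add_mul, hy, hz, add_zero]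
  · rw [Set.mem_ofPred_eq, sum_mul_mul_mul_of_commute univ a (fun i => c ^ (i : ℕ)) y z
      fun i _ => Commute.pow_right hzc i, hy, zero_mul]
end

section
/- Let R be a division ring, P(x) ∈ R[x] a polynomial, and c ∈ R an element not in the center of R with P(c) ≠ 0. Then there are infinitely many elements d in the conjugacy class [c] = {qcq⁻¹ : q ∈ R, q ≠ 0} with P(d) ≠ 0. -/
/-!
Put `λ(q) = ∑ aᵢ q cⁱ` for `P = ∑ aᵢ Xⁱ`. It is additive, right linear over the centralizer `C`
of `c`, and `λ(q) = P(q c q⁻¹) q` for `q ≠ 0`; so every `q` outside the `C`-subspace `V = ker λ`,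
which misses `1`, gives a conjugate `q c q⁻¹` that is not a root of `P`, and two such `q` give the
same conjugate only if they differ by a right factor in `C`.

If `C` is finite, then `R` is infinite by Wedderburn, hence so is `R \ V ⊇ V + 1`, while the fibres
`q C` of `q ↦ q c q⁻¹` are finite. If `C` is infinite, pick `u ∉ C`: the conjugates by `1 + u s`,
`s ∈ C`, are pairwise distinct because `1` and `u` are right `C`-independent, and `1 + u s ∈ V`
for at most one `s`.
-/

open Polynomial

lemma AddSubgroup.infinite_compl_of_notMem {G : Type*} [AddGroup G] [Infinite G]
    (H : AddSubgroup G) {g : G} (hg : g ∉ H) : (H : Set G)ᶜ.Infinite := by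
  intro hfin
  have hH : (H : Set G).Finite := by
    refine (hfin.preimage (add_left_injective g).injOn).subset fun x hx hxg => hg ?_
    simpa using H.add_mem (H.neg_mem hx) hxg
  exact Set.infinite_univ (by simpa using hH.union hfin)

lemma Subring.mem_centralizer_singleton_iff {R : Type*} [Ring R] {c s : R} :
    s ∈ centralizer {c} ↔ Commute c s := by
  simp only [mem_centralizer_iff, Set.mem_singleton_iff, forall_eq, Commute, SemiconjBy]

section DivisionRing

variable {R : Type*} [DivisionRing R] {c : R}

lemma inv_mul_mem_centralizer_of_conj_eq {q q' : R} (hq : q ≠ 0) (hq' : q' ≠ 0)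
    (h : q * c * q⁻¹ = q' * c * q'⁻¹) : q⁻¹ * q' ∈ Subring.centralizer {c} := by
  have h' : q' * c = q * c * q⁻¹ * q' := by rw [h, inv_mul_cancel_right₀ hq']
  rw [Subring.mem_centralizer_singleton_iff, Commute, SemiconjBy, mul_assoc, h']
  simp only [mul_assoc, inv_mul_cancel_left₀ hq]

lemma finite_setOf_conj_eq (hC : (Subring.centralizer {c} : Set R).Finite) (d : R) :
    {q : R | q * c * q⁻¹ = d}.Finite := by
  by_cases h : ∃ q₀, q₀ ≠ 0 ∧ q₀ * c * q₀⁻¹ = d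
  · obtain ⟨q₀, hq₀, rfl⟩ := h
    refine ((hC.image (q₀ * ·)).insert 0).subset fun q hq => ?_
    rcases eq_or_ne q 0 with rfl | hq0
    · exact Set.mem_insert _ _
    · exact Or.inr ⟨q₀⁻¹ * q, inv_mul_mem_centralizer_of_conj_eq hq₀ hq0 hq.symm,
        mul_inv_cancel_left₀ hq₀ q⟩
  · push Not at h
    exact (Set.finite_singleton 0).subset fun q hq => of_not_not fun hq0 => h q hq0 hq

lemma eq_and_eq_of_add_mul_eq_add_mul {u a b a' b' : R} (hu : u ∉ Subring.centralizer {c})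
    (ha : a ∈ Subring.centralizer {c}) (ha' : a' ∈ Subring.centralizer {c})
    (hb : b ∈ Subring.centralizer {c}) (hb' : b' ∈ Subring.centralizer {c})
    (h : a + u * b = a' + u * b') : a = a' ∧ b = b' := by
  have hbb' : b = b' := by
    by_contra hne
    have hsub : u * (b - b') = a' - a := by
      rw [mul_sub, sub_eq_sub_iff_add_eq_add, add_comm, h, add_comm]
    have hu' : u = (a' - a) * (b - b')⁻¹ := by
      rw [← hsub, mul_inv_cancel_right₀ (sub_ne_zero.2 hne)]
    exact hu (hu' ▸ mul_mem (sub_mem ha' ha) (Set.inv_mem_centralizer₀ (sub_mem hb hb')))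
  subst hbb'
  exact ⟨add_right_cancel h, rfl⟩

lemma injOn_conj_one_add_mul {u : R} (hu : u ∉ Subring.centralizer {c}) :
    Set.InjOn (fun s => (1 + u * s) * c * (1 + u * s)⁻¹) (Subring.centralizer {c}) := by
  have hne {t : R} (ht : t ∈ Subring.centralizer {c}) : 1 + u * t ≠ 0 := fun h0 => one_ne_zero <|
    (eq_and_eq_of_add_mul_eq_add_mul hu (one_mem _) (zero_mem _) ht (zero_mem _)
      (by rw [h0, mul_zero, add_zero])).1
  intro s hs s' hs' h
  set z := (1 + u * s)⁻¹ * (1 + u * s')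
  have hz : z ∈ Subring.centralizer {c} := inv_mul_mem_centralizer_of_conj_eq (hne hs) (hne hs') h
  have hs'z : 1 + u * s' = z + u * (s * z) := by
    rw [← mul_assoc, ← one_add_mul, mul_inv_cancel_left₀ (hne hs)]
  obtain ⟨hz1, hs's⟩ :=
    eq_and_eq_of_add_mul_eq_add_mul hu (one_mem _) hz hs' (mul_mem hs hz) hs'z
  rw [← hz1, mul_one] at hs's
  exact hs's.symm

end DivisionRing

namespace Polynomial

def evalConjMul {R : Type*} [Semiring R] (P : R[X]) (c : R) : R →+ R where
  toFun q := P.sum fun i a => a * q * c ^ i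
  map_zero' := by simp [Polynomial.sum_def]
  map_add' q q' := by simp only [Polynomial.sum_def, mul_add, add_mul, Finset.sum_add_distrib]

section Semiring

variable {R : Type*} [Semiring R] (P : R[X]) (c : R)

lemma evalConjMul_apply (q : R) : P.evalConjMul c q = P.sum fun i a => a * q * c ^ i := rfl

lemma evalConjMul_one : P.evalConjMul c 1 = P.eval c := by
  simp [evalConjMul_apply, eval_eq_sum]

lemma evalConjMul_mul_of_commute {s : R} (hs : Commute s c) (q : R) :
    P.evalConjMul c (q * s) = P.evalConjMul c q * s := by
  simp only [evalConjMul_apply, Polynomial.sum_def, Finset.sum_mul, mul_assoc, (hs.pow_right _).eq]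

end Semiring

lemma mul_mem_ker_evalConjMul {R : Type*} [Ring R] (P : R[X]) {c x s : R}
    (hx : x ∈ (P.evalConjMul c).ker) (hs : s ∈ Subring.centralizer {c}) :
    x * s ∈ (P.evalConjMul c).ker := by
  rw [AddMonoidHom.mem_ker] at hx ⊢
  rw [P.evalConjMul_mul_of_commute c (Subring.mem_centralizer_singleton_iff.1 hs).symm, hx,
    zero_mul]

section DivisionRing

variable {R : Type*} [DivisionRing R] (P : R[X]) {c : R}

lemma evalConjMul_eq_eval_mul {q : R} (hq : q ≠ 0) :
    P.evalConjMul c q = P.eval (q * c * q⁻¹) * q := by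
  have hpow (i : ℕ) : (q * c * q⁻¹) ^ i * q = q * c ^ i := by
    simpa [hq] using congrArg (· * q) (GroupWithZero.conj_pow₀ (s := i) (d := c) (inv_ne_zero hq))
  rw [evalConjMul_apply, eval_eq_sum, Polynomial.sum_def, Polynomial.sum_def, Finset.sum_mul]
  exact Finset.sum_congr rfl fun i _ => by rw [mul_assoc _ _ q, hpow, mul_assoc]

lemma subsingleton_setOf_one_add_mul_mem_ker_evalConjMul (hP : P.eval c ≠ 0) (u : R) :
    {s ∈ Subring.centralizer {c} | 1 + u * s ∈ (P.evalConjMul c).ker}.Subsingleton := by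
  rintro s ⟨hs, hsV⟩ s' ⟨hs', hs'V⟩
  by_contra hne
  have huV : u ∈ (P.evalConjMul c).ker := by
    have := P.mul_mem_ker_evalConjMul (sub_mem hsV hs'V)
      (Set.inv_mem_centralizer₀ (sub_mem hs hs'))
    rwa [add_sub_add_left_eq_sub, ← mul_sub, mul_inv_cancel_right₀ (sub_ne_zero.2 hne)] at this
  have h1 : (1 : R) ∈ (P.evalConjMul c).ker := by
    simpa using sub_mem hsV (P.mul_mem_ker_evalConjMul huV hs)
  exact hP (by rwa [AddMonoidHom.mem_ker, evalConjMul_one] at h1)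

lemma infinite_image_conj_compl_ker_evalConjMul_of_infinite_centralizer
    (hc : c ∉ Subring.center R) (hP : P.eval c ≠ 0)
    (hC : (Subring.centralizer {c} : Set R).Infinite) :
    ((fun q => q * c * q⁻¹) '' ((P.evalConjMul c).ker : Set R)ᶜ).Infinite := by
  obtain ⟨u, -, hu⟩ := SetLike.exists_of_lt
    (lt_top_iff_ne_top.2 (by simpa using hc) : Subring.centralizer {c} < ⊤)
  set T := {s ∈ Subring.centralizer {c} | 1 + u * s ∉ (P.evalConjMul c).ker}
  have hT : T.Infinite :=
    (hC.sdiff (P.subsingleton_setOf_one_add_mul_mem_ker_evalConjMul hP u).finite).mono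
      fun s hs => ⟨hs.1, fun h => hs.2 ⟨hs.1, h⟩⟩
  refine (hT.image ((injOn_conj_one_add_mul hu).mono fun s hs => hs.1)).mono ?_
  rintro _ ⟨s, ⟨-, hsV⟩, rfl⟩
  exact ⟨_, hsV, rfl⟩

lemma infinite_image_conj_compl_ker_evalConjMul_of_finite_centralizer
    (hc : c ∉ Subring.center R) (hP : P.eval c ≠ 0)
    (hC : (Subring.centralizer {c} : Set R).Finite) :
    ((fun q => q * c * q⁻¹) '' ((P.evalConjMul c).ker : Set R)ᶜ).Infinite := by
  -- a finite `R` would be a field by `littleWedderburn`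
  have : Infinite R :=
    not_finite_iff_infinite.1 fun _ => hc (Subring.mem_center_iff.2 fun g => mul_comm g c)
  have hV : ((P.evalConjMul c).ker : Set R)ᶜ.Infinite :=
    AddSubgroup.infinite_compl_of_notMem _ (g := 1) (by simpa [evalConjMul_one] using hP)
  intro hfin
  exact hV ((hfin.preimage' fun d _ => finite_setOf_conj_eq hC d).subset
    (Set.subset_preimage_image _ _))

end DivisionRing

end Polynomial

/-- If `c` is not central and `P(c) ≠ 0`, then infinitely many elements of the conjugacy
class of `c` are not right roots of `P`. -/
theorem stmt8 {R : Type*} [DivisionRing R] (P : R[X]) (c : R)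
    (hc : c ∉ Subring.center R) (hP : P.eval c ≠ 0) :
    {d : R | (∃ q : R, q ≠ 0 ∧ d = q * c * q⁻¹) ∧ P.eval d ≠ 0}.Infinite := by
  have hconj : ((fun q => q * c * q⁻¹) '' ((P.evalConjMul c).ker : Set R)ᶜ).Infinite := by
    rcases (Subring.centralizer {c} : Set R).finite_or_infinite with hC | hC
    · exact P.infinite_image_conj_compl_ker_evalConjMul_of_finite_centralizer hc hP hC
    · exact P.infinite_image_conj_compl_ker_evalConjMul_of_infinite_centralizer hc hP hC
  refine hconj.mono ?_
  rintro _ ⟨q, hq, rfl⟩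
  have hq0 : q ≠ 0 := fun h => hq (h ▸ zero_mem _)
  refine ⟨⟨q, hq0, rfl⟩, fun h => hq ?_⟩
  rw [SetLike.mem_coe, AddMonoidHom.mem_ker, evalConjMul_eq_eval_mul P hq0, h, zero_mul]
end

section
/- (Herstein) In a division ring R, the conjugacy class [c] = {qcq⁻¹ : q ∈ R*} of any element c not lying in the center of R is infinite. -/
/-!
Conjugation by the units of `R` is a group action whose orbit through `c` is `[c]` and whose
stabilizer embeds into the centralizer `{x | Commute x c}`. Pick `u` not commuting with `c`:
for distinct `l` in the centralizer the conjugates of `c` by `u + l` are distinct, so a finite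
`[c]` forces a finite centralizer, hence by orbit–stabilizer a finite `R`. By Wedderburn's
little theorem `R` is then a field, contradicting `c ∉ Z(R)`.
-/

open MulAction

lemma MulAction.finite_of_finite_orbit_of_finite_stabilizer {G X : Type*} [Group G]
    [MulAction G X] (x : X) [Finite (orbit G x)] [Finite (stabilizer G x)] : Finite G :=
  have : Finite (G ⧸ stabilizer G x) := .of_equiv _ (orbitEquivQuotientStabilizer G x)
  .of_subgroup_quotient (stabilizer G x)

section GroupWithZero

variable {G₀ : Type*} [GroupWithZero G₀]

lemma GroupWithZero.finite_of_finite_units [Finite G₀ˣ] : Finite G₀ := by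
  classical
  have : Finite {a : G₀ // a ≠ 0} := .of_equiv _ unitsEquivNeZero
  exact .of_equiv _ (Equiv.sumCompl (· = (0 : G₀)))

lemma ConjAct.orbit_units_eq (c : G₀) :
    orbit (ConjAct G₀ˣ) c = {d | ∃ q : G₀, q ≠ 0 ∧ d = q * c * q⁻¹} := by
  ext d
  simp only [mem_orbit_iff, ConjAct.units_smul_def, Set.mem_ofPred_eq]
  constructor
  · rintro ⟨g, rfl⟩
    exact ⟨_, (ConjAct.ofConjAct g).ne_zero, by simp⟩
  · rintro ⟨q, hq, rfl⟩
    exact ⟨ConjAct.toConjAct (Units.mk0 q hq), by simp⟩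

lemma ConjAct.finite_stabilizer_units {c : G₀} (h : {x : G₀ | Commute x c}.Finite) :
    Finite (stabilizer (ConjAct G₀ˣ) c) := by
  suffices (stabilizer (ConjAct G₀ˣ) c : Set (ConjAct G₀ˣ)).Finite from this.to_subtype
  refine h.of_injOn (f := fun g : ConjAct G₀ˣ => ((ConjAct.ofConjAct g : G₀ˣ) : G₀)) ?_ ?_
  · intro g hg
    exact (Units.mul_inv_eq_iff_eq_mul _).1 ((ConjAct.units_smul_def g c).symm.trans hg)
  · intro g _ g' _ hgg'
    exact ConjAct.ofConjAct.injective (Units.ext hgg')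

end GroupWithZero

section DivisionRing

variable {R : Type*} [DivisionRing R]

lemma commute_of_conj_add_eq_conj_add {c u l m : R} (hl : Commute l c) (hm : Commute m c)
    (hlm : l ≠ m) (hul : u + l ≠ 0) (hum : u + m ≠ 0)
    (h : (u + l) * c * (u + l)⁻¹ = (u + m) * c * (u + m)⁻¹) : Commute u c := by
  set d := (u + l) * c * (u + l)⁻¹
  have hdl : (u + l) * c = d * (u + l) := by simp [d, hul]
  have hdm : (u + m) * c = d * (u + m) := by simp [h, hum]
  -- `l - m` also satisfies `x * c = d * x`, and it commutes with `c`
  have hcd : c = d := by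
    refine mul_right_cancel₀ (sub_ne_zero.2 hlm) ?_
    calc c * (l - m) = (u + l) * c - (u + m) * c := by rw [← (hl.sub_left hm).eq]; noncomm_ring
      _ = d * (l - m) := by rw [hdl, hdm]; noncomm_ring
  have : Commute (u + l) c := by rw [Commute, SemiconjBy, hdl, hcd]
  simpa using this.sub_left hl

lemma finite_setOf_commute_of_finite_conjugates {c u : R} (hu : ¬Commute u c)
    (hS : {d : R | ∃ q : R, q ≠ 0 ∧ d = q * c * q⁻¹}.Finite) : {x : R | Commute x c}.Finite := by
  have hne : ∀ l : R, l ≠ -u → u + l ≠ 0 := fun l hl h => hl (eq_neg_of_add_eq_zero_right h)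
  refine Set.Finite.of_sdiff (t := {-u}) ?_ (Set.finite_singleton _)
  refine hS.of_injOn (f := fun l => (u + l) * c * (u + l)⁻¹) ?_ ?_
  · rintro l ⟨-, hl⟩
    exact ⟨u + l, hne l hl, rfl⟩
  · rintro l ⟨hl, hl'⟩ m ⟨hm, hm'⟩ h
    by_contra hlm
    exact hu (commute_of_conj_add_eq_conj_add hl hm hlm (hne l hl') (hne m hm') h)

end DivisionRing

/-- (Herstein) The conjugacy class of a non-central element of a division ring is infinite. -/
theorem stmt9 {R : Type*} [DivisionRing R] (c : R) (hc : c ∉ Subring.center R) :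
    {d : R | ∃ q : R, q ≠ 0 ∧ d = q * c * q⁻¹}.Infinite := by
  obtain ⟨u, hu⟩ : ∃ u : R, ¬Commute u c := by
    by_contra! h
    exact hc (Subring.mem_center_iff.2 fun u => (h u).eq)
  intro hS
  have hK := finite_setOf_commute_of_finite_conjugates hu hS
  rw [← ConjAct.orbit_units_eq] at hS
  have := hS.to_subtype
  have := ConjAct.finite_stabilizer_units hK
  have : Finite Rˣ := finite_of_finite_orbit_of_finite_stabilizer (G := ConjAct Rˣ) c
  have : Finite R := GroupWithZero.finite_of_finite_units
  let := littleWedderburn R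
  exact hu (mul_comm u c)
end

section
/- (Gordon–Motzkin) Let R be a division ring and P(x) ∈ R[x] a nonzero polynomial of degree n. Then the right roots of P(x) lie in at most n distinct conjugacy classes of R. -/
/-!
Dividing on the right, a root `a` of `P` gives `P = Q * (X - a)` with `deg Q = deg P - 1`.
For any other root `b`, the product formula `(f * g)(b) = f(g(b) b g(b)⁻¹) g(b)`, valid when
`g(b) ≠ 0`, shows that the conjugate `(b - a) b (b - a)⁻¹` of `b` is a root of `Q`. By induction
the roots of `Q` lie in at most `deg P - 1` conjugacy classes, and the class of `a` is the only
one that may have to be added.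
-/

open Polynomial

namespace Polynomial

variable {R : Type*}

section Ring

variable [Ring R]

theorem exists_eq_mul_X_sub_C_add_C_eval (p : R[X]) (a : R) :
    ∃ q : R[X], p = q * (X - C a) + C (p.eval a) := by
  induction p using Polynomial.induction_on' with
  | add p r hp hr =>
    obtain ⟨q₁, h₁⟩ := hp
    obtain ⟨q₂, h₂⟩ := hr
    refine ⟨q₁ + q₂, ?_⟩
    rw [eval_add, C_add]
    conv_lhs => rw [h₁, h₂]
    noncomm_ring
  | monomial n b =>
    refine ⟨C b * ∑ i ∈ Finset.range n, X ^ i * C a ^ (n - 1 - i), ?_⟩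
    rw [eval_monomial, ← C_mul_X_pow_eq_monomial, mul_assoc,
      (commute_X (C a)).geom_sum₂_mul n, C_mul, C_pow]
    noncomm_ring

theorem exists_eq_mul_X_sub_C_of_isRoot {p : R[X]} {a : R} (h : p.IsRoot a) :
    ∃ q : R[X], p = q * (X - C a) := by
  obtain ⟨q, hq⟩ := exists_eq_mul_X_sub_C_add_C_eval p a
  exact ⟨q, by rwa [h.eq_zero, C_0, add_zero] at hq⟩

theorem eval_mul_of_semiconjBy (f g : R[X]) {b c : R} (h : SemiconjBy (g.eval b) b c) :
    (f * g).eval b = f.eval c * g.eval b := by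
  induction f using Polynomial.induction_on' with
  | add f₁ f₂ h₁ h₂ => rw [add_mul, eval_add, h₁, h₂, eval_add, add_mul]
  | monomial n r =>
    rw [← C_mul_X_pow_eq_monomial, mul_assoc, (commute_X_pow g n).eq, eval_C_mul,
      eval_C_mul, eval_mul_X_pow, eval_X_pow, (h.pow_right n).eq, mul_assoc]

end Ring

section DivisionRing

variable [DivisionRing R]

theorem eval_mul_of_eval_ne_zero (f g : R[X]) {b : R} (hg : g.eval b ≠ 0) :
    (f * g).eval b = f.eval (g.eval b * b * (g.eval b)⁻¹) * g.eval b :=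
  eval_mul_of_semiconjBy f g (by rw [SemiconjBy, inv_mul_cancel_right₀ hg])

theorem isRoot_conj_of_isRoot_mul_X_sub_C {q : R[X]} {a b : R}
    (hb : (q * (X - C a)).IsRoot b) (hba : b ≠ a) :
    q.IsRoot ((b - a) * b * (b - a)⁻¹) := by
  have hne : (X - C a).eval b ≠ 0 := by simpa [sub_eq_zero] using hba
  have := eval_mul_of_eval_ne_zero q (X - C a) hne
  rw [hb.eq_zero, eq_comm, mul_eq_zero, or_iff_left hne] at this
  simpa using this

theorem exists_finset_card_le_natDegree_forall_isRoot_isConj (P : R[X]) (hP : P ≠ 0) :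
    ∃ s : Finset R, s.card ≤ P.natDegree ∧ ∀ a, P.IsRoot a → ∃ b ∈ s, IsConj b a := by
  classical
  obtain ⟨a, ha⟩ | hroot := em (∃ a, P.IsRoot a)
  swap
  · exact ⟨∅, by simp, fun a ha => (hroot ⟨a, ha⟩).elim⟩
  obtain ⟨Q, hPQ⟩ := exists_eq_mul_X_sub_C_of_isRoot ha
  have hQ : Q ≠ 0 := by rintro rfl; simp [hPQ] at hP
  have hdeg : P.natDegree = Q.natDegree + 1 := by
    rw [hPQ, natDegree_mul hQ (X_sub_C_ne_zero a), natDegree_X_sub_C]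
  obtain ⟨s, hs, hconj⟩ := exists_finset_card_le_natDegree_forall_isRoot_isConj Q hQ
  refine ⟨insert a s, (Finset.card_insert_le a s).trans (by omega), fun b hb => ?_⟩
  obtain rfl | hba := eq_or_ne b a
  · exact ⟨b, Finset.mem_insert_self b s, IsConj.refl b⟩
  obtain ⟨d, hd, hdb⟩ := hconj _ (isRoot_conj_of_isRoot_mul_X_sub_C (hPQ ▸ hb) hba)
  have hb_conj : IsConj ((b - a) * b * (b - a)⁻¹) b :=
    (GroupWithZero.isConj_iff₀.mpr ⟨b - a, sub_ne_zero.mpr hba, rfl⟩).symm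
  exact ⟨d, Finset.mem_insert_of_mem hd, hdb.trans hb_conj⟩
termination_by P.natDegree
decreasing_by omega

end DivisionRing

end Polynomial

/-- (Gordon–Motzkin) The right roots of a nonzero polynomial of degree `n` over a division
ring lie in at most `n` conjugacy classes. -/
theorem stmt10 {R : Type*} [DivisionRing R] (P : R[X]) (hP : P ≠ 0) :
    ∃ s : Finset R, s.card ≤ P.natDegree ∧
      ∀ a : R, P.eval a = 0 → ∃ b ∈ s, ∃ q : R, q ≠ 0 ∧ a = q * b * q⁻¹ := by
  obtain ⟨s, hs, hconj⟩ := exists_finset_card_le_natDegree_forall_isRoot_isConj P hP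
  refine ⟨s, hs, fun a ha => ?_⟩
  obtain ⟨b, hb, hba⟩ := hconj a ha
  obtain ⟨q, hq, rfl⟩ := GroupWithZero.isConj_iff₀.mp hba
  exact ⟨b, hb, q, hq, rfl⟩
end

section
/- Let Q be a quaternion division algebra over a field F (a 4-dimensional central division algebra over F) and let B be a conjugacy class of a non-central element of Q, with minimal polynomial λ(x) ∈ F[x] (of degree 2) over F. If P(x) ∈ Q[x] has two distinct right roots in B, then λ(x) right-divides P(x) in Q[x] and every element of B is a right root of P(x). -/
/-!
The minimal polynomial `μ` of `a` has central coefficients, so it commutes with every polynomial,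
and right division `P = G * μ + R` gives `P(x) = R(x)` at every root `x` of `μ`; all conjugates of
`a` are such roots. Having two distinct conjugates, `a` is not central, so `F[a]` is a proper
subfield of `Q` and the tower law `4 = [F[a] : F] * [Q : F[a]]` forces `deg μ ≤ 2`. The remainder
`R` is then linear with two distinct roots, hence zero.
-/

open Polynomial

namespace Polynomial

theorem eq_zero_of_degree_le_one_of_eval_eq_zero {R : Type*} [Ring R] [NoZeroDivisors R]
    {p : R[X]} (hp : p.degree ≤ 1) {x y : R} (hxy : x ≠ y) (hx : p.eval x = 0)
    (hy : p.eval y = 0) : p = 0 := by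
  have heval (z : R) : p.eval z = p.coeff 1 * z + p.coeff 0 := by
    conv_lhs => rw [eq_X_add_C_of_degree_le_one hp]
    simp
  rw [heval] at hx hy
  have h₁ : p.coeff 1 = 0 := by
    have : p.coeff 1 * (x - y) = 0 := by
      rw [mul_sub, sub_eq_zero]
      exact add_right_cancel (hx.trans hy.symm)
    exact (mul_eq_zero.mp this).resolve_right (sub_ne_zero.mpr hxy)
  have h₀ : p.coeff 0 = 0 := by rwa [h₁, zero_mul, zero_add] at hx
  rw [eq_X_add_C_of_degree_le_one hp, h₁, h₀, C_0, zero_mul, zero_add]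

section CentralCoefficients

variable {F A : Type*} [CommSemiring F]

section Semiring

variable [Semiring A] [Algebra F A]

theorem commute_map_algebraMap (f : F[X]) (p : A[X]) : Commute (f.map (algebraMap F A)) p := by
  induction f using Polynomial.induction_on' with
  | add f g hf hg => rw [Polynomial.map_add]; exact hf.add_left hg
  | monomial n c =>
    rw [map_monomial, ← C_mul_X_pow_eq_monomial]
    refine Commute.mul_left ?_ ((commute_X p).pow_left n)
    rw [← Polynomial.algebraMap_apply]
    exact Algebra.commutes c p

theorem eval_mul_map_algebraMap (p : A[X]) (f : F[X]) (x : A) :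
    (p * f.map (algebraMap F A)).eval x = p.eval x * aeval x f := by
  rw [eval, eval₂_mul_noncomm, ← eval, ← eval, eval_map_algebraMap]
  intro k
  rw [coeff_map]
  exact Algebra.commutes _ _

end Semiring

section Ring

variable [Ring A] [Algebra F A]

theorem eval_modByMonic_map_of_aeval_eq_zero (P : A[X]) {f : F[X]} {x : A} (hx : aeval x f = 0) :
    (P %ₘ f.map (algebraMap F A)).eval x = P.eval x := by
  conv_rhs => rw [← modByMonic_add_div P (f.map _), (commute_map_algebraMap f _).eq]
  rw [eval_add, eval_mul_map_algebraMap, hx, mul_zero, add_zero]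

theorem eq_divByMonic_mul_map_of_modByMonic_eq_zero {P : A[X]} {f : F[X]}
    (h : P %ₘ f.map (algebraMap F A) = 0) :
    P = P /ₘ f.map (algebraMap F A) * f.map (algebraMap F A) := by
  conv_lhs => rw [← modByMonic_add_div P (f.map _), h, zero_add, (commute_map_algebraMap f _).eq]

theorem modByMonic_map_eq_zero_of_eval_eq_zero [NoZeroDivisors A] {P : A[X]} {f : F[X]}
    (hf : f.Monic) (hdeg : f.natDegree ≤ 2) {x y : A} (hxy : x ≠ y) (hfx : aeval x f = 0)
    (hfy : aeval y f = 0) (hPx : P.eval x = 0) (hPy : P.eval y = 0) :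
    P %ₘ f.map (algebraMap F A) = 0 := by
  nontriviality A
  have hdeg' : (P %ₘ f.map (algebraMap F A)).degree ≤ 1 := by
    have := degree_modByMonic_lt P (hf.map (algebraMap F A))
    have h2 : (f.map (algebraMap F A)).degree ≤ 2 :=
      degree_map_le.trans (degree_le_of_natDegree_le hdeg)
    exact Order.le_of_lt_succ (this.trans_le h2)
  exact eq_zero_of_degree_le_one_of_eval_eq_zero hdeg' hxy
    (by rwa [eval_modByMonic_map_of_aeval_eq_zero P hfx])
    (by rwa [eval_modByMonic_map_of_aeval_eq_zero P hfy])

end Ring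

end CentralCoefficients

end Polynomial

section DivisionRing

variable {F Q : Type*} [Field F] [DivisionRing Q] [Algebra F Q]

theorem minpoly_conj (a : Q) {q : Q} (hq : q ≠ 0) : minpoly F (q * a * q⁻¹) = minpoly F a :=
  minpoly.algEquiv_eq (MulSemiringAction.toAlgEquiv F Q (ConjAct.toConjAct (Units.mk0 q hq))) a

theorem conj_eq_self_of_forall_commute {a : Q} (ha : ∀ w, Commute a w) {q : Q} (hq : q ≠ 0) :
    q * a * q⁻¹ = a := by
  rw [(ha q).symm.eq, mul_inv_cancel_right₀ hq]

theorem natDegree_minpoly_le_two_of_not_commute [FiniteDimensional F Q]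
    (hdim : Module.finrank F Q = 4) {a w : Q} (h : ¬Commute a w) :
    (minpoly F a).natDegree ≤ 2 := by
  set K := Algebra.adjoin F {a}
  have hdegK : (minpoly F a).natDegree ≤ Module.finrank F K := by
    let a' : K := ⟨a, Algebra.self_mem_adjoin_singleton F a⟩
    have hK : minpoly F a = minpoly F a' := minpoly.algHom_eq K.val Subtype.val_injective a'
    exact hK ▸ minpoly.natDegree_le a'
  let _ : DivisionRing K := divisionRingOfFiniteDimensional F K
  have htower : Module.finrank F K * Module.finrank K Q = 4 := by
    rw [Module.finrank_mul_finrank, hdim]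
  have hne_one : Module.finrank K Q ≠ 1 := by
    rw [Ne, finrank_eq_one_iff_of_nonzero' (1 : Q) one_ne_zero]
    intro hspan
    obtain ⟨c, rfl⟩ := hspan w
    exact h (by simpa [Subalgebra.smul_def] using Algebra.commute_of_mem_adjoin_self c.2)
  have hne_zero : Module.finrank K Q ≠ 0 := by
    intro h0
    simp [h0] at htower
  have : Module.finrank F K * 2 ≤ 4 := htower ▸ Nat.mul_le_mul_left _ (by omega)
  omega

end DivisionRing

theorem stmt12_general {F Q : Type*} [Field F] [DivisionRing Q] [Algebra F Q]
    [FiniteDimensional F Q] (hdim : Module.finrank F Q = 4)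
    (a : Q)
    (P : Q[X]) (r₁ r₂ : Q)
    (h₁ : ∃ q : Q, q ≠ 0 ∧ r₁ = q * a * q⁻¹)
    (h₂ : ∃ q : Q, q ≠ 0 ∧ r₂ = q * a * q⁻¹)
    (hne : r₁ ≠ r₂) (hr₁ : P.eval r₁ = 0) (hr₂ : P.eval r₂ = 0) :
    (∃ G : Q[X], P = G * (minpoly F a).map (algebraMap F Q)) ∧
      ∀ d : Q, (∃ q : Q, q ≠ 0 ∧ d = q * a * q⁻¹) → P.eval d = 0 := by
  have hroot (d : Q) (hd : ∃ q : Q, q ≠ 0 ∧ d = q * a * q⁻¹) :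
      aeval d (minpoly F a) = 0 := by
    obtain ⟨q, hq, rfl⟩ := hd
    rw [← minpoly_conj a hq]
    exact minpoly.aeval F _
  have hnoncentral : ∃ w, ¬Commute a w := by
    by_contra! hcentral
    obtain ⟨q₁, hq₁, rfl⟩ := h₁
    obtain ⟨q₂, hq₂, rfl⟩ := h₂
    rw [conj_eq_self_of_forall_commute hcentral hq₁,
      conj_eq_self_of_forall_commute hcentral hq₂] at hne
    exact hne rfl
  obtain ⟨w, hw⟩ := hnoncentral
  have hmod : P %ₘ (minpoly F a).map (algebraMap F Q) = 0 :=
    modByMonic_map_eq_zero_of_eval_eq_zero (minpoly.monic (IsIntegral.of_finite F a))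
      (natDegree_minpoly_le_two_of_not_commute hdim hw) hne (hroot r₁ h₁) (hroot r₂ h₂)
      hr₁ hr₂
  refine ⟨⟨_, eq_divByMonic_mul_map_of_modByMonic_eq_zero hmod⟩, fun d hd => ?_⟩
  rw [← eval_modByMonic_map_of_aeval_eq_zero P (hroot d hd), hmod, eval_zero]

/-- Over a quaternion division algebra `Q` (a 4-dimensional central division algebra over
`F`), if `P(x)` has two distinct right roots in the conjugacy class of a non-central `a`,
then the minimal polynomial of `a` over `F` right-divides `P` and every element of the
conjugacy class is a right root of `P`. -/
theorem stmt12 {F Q : Type*} [Field F] [DivisionRing Q] [Algebra F Q]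
    [FiniteDimensional F Q] (hdim : Module.finrank F Q = 4)
    (hcent : ∀ z : Q, (∀ w : Q, z * w = w * z) → ∃ r : F, z = algebraMap F Q r)
    (a : Q) (ha : ¬∃ r : F, a = algebraMap F Q r)
    (P : Q[X]) (r₁ r₂ : Q)
    (h₁ : ∃ q : Q, q ≠ 0 ∧ r₁ = q * a * q⁻¹)
    (h₂ : ∃ q : Q, q ≠ 0 ∧ r₂ = q * a * q⁻¹)
    (hne : r₁ ≠ r₂) (hr₁ : P.eval r₁ = 0) (hr₂ : P.eval r₂ = 0) :
    (∃ G : Q[X], P = G * (minpoly F a).map (algebraMap F Q)) ∧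
      ∀ d : Q, (∃ q : Q, q ≠ 0 ∧ d = q * a * q⁻¹) → P.eval d = 0 :=
  stmt12_general hdim a P r₁ r₂ h₁ h₂ hne hr₁ hr₂
end

section
/- Let Q be a quaternion division algebra over F and P(x) ∈ Q[x] a monic polynomial of even degree n. If P(x) has exactly n/2 distinct conjugacy classes of spherical roots, then all coefficients of P(x) lie in F. -/
/-!
A non-central `q` satisfies a quadratic equation over `F`: if `w` does not commute with `q`,
then `1, q, w, q * w` is an `F`-basis, and writing `q ^ 2 = v + u * w` with `u, v ∈ F + F q`,
the identity `q * q ^ 2 = q ^ 2 * q` forces `u = 0`. So the minimal polynomial `μ` of `q` over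
`F` is an irreducible quadratic, and all conjugates of `q` are roots of it. Dividing `P` by the
central polynomial `μ` leaves a remainder of degree `≤ 1` vanishing on the whole conjugacy class
of `q`, hence zero: `μ` divides `P` when `q` is a spherical root. Non-central elements with the
same minimal polynomial are conjugate (Dickson), so `n / 2` pairwise non-conjugate spherical
roots give pairwise coprime quadratics; their product is central, monic of degree `n` and
divides `P`, so it is `P`.
-/

open Polynomial

/-- `q` is a spherical root of `P`: `q` is non-central (not in `F`) and every conjugate
of `q` is a right root of `P`. -/
def IsSphericalRoot (F : Type*) {Q : Type*} [Field F] [DivisionRing Q] [Algebra F Q]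
    (P : Q[X]) (q : Q) : Prop :=
  (¬∃ r : F, q = algebraMap F Q r) ∧ ∀ g : Q, g ≠ 0 → P.eval (g * q * g⁻¹) = 0

open Function

section CentralCoefficients

variable {F Q : Type*} [CommSemiring F] [Semiring Q] [Algebra F Q]

theorem Polynomial.commute_map_algebraMap_s15 (u : F[X]) (W : Q[X]) :
    Commute (u.map (algebraMap F Q)) W := by
  induction u using Polynomial.induction_on' with
  | add p q hp hq => rw [Polynomial.map_add]; exact hp.add_left hq
  | monomial m b =>
    rw [map_monomial, ← C_mul_X_pow_eq_monomial]
    refine Commute.mul_left ?_ ((commute_X W).pow_left m)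
    ext k
    simp [coeff_C_mul, coeff_mul_C, Algebra.commutes]

theorem Polynomial.eval_map_algebraMap_mul (u : F[X]) (S : Q[X]) (x : Q) :
    (u.map (algebraMap F Q) * S).eval x = S.eval x * aeval x u := by
  rw [(commute_map_algebraMap_s15 u S).eq, eval, eval₂_mul_noncomm, ← eval, eval₂_map,
    RingHom.id_comp, aeval_def]
  intro k
  simpa only [coeff_map, RingHom.id_apply] using Algebra.commute_algebraMap_left _ _

theorem Polynomial.aeval_eq_of_monic_of_natDegree_eq_two {p : F[X]} (hp : p.Monic)
    (hdeg : p.natDegree = 2) (x : Q) :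
    aeval x p = x ^ 2 + p.coeff 1 • x + p.coeff 0 • 1 := by
  have h2 : p.coeff 2 = 1 := hdeg ▸ hp.coeff_natDegree
  rw [aeval_eq_sum_range, hdeg]
  simp only [Finset.sum_range_succ, Finset.sum_range_zero, h2, zero_add, pow_zero, pow_one,
    one_smul]
  abel

theorem Polynomial.map_mul_dvd_of_isCoprime {c d : F[X]} (hcd : IsCoprime c d) {P : Q[X]}
    (hc : c.map (algebraMap F Q) ∣ P) (hd : d.map (algebraMap F Q) ∣ P) :
    (c * d).map (algebraMap F Q) ∣ P := by
  let φ := mapRingHom (algebraMap F Q)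
  obtain ⟨u, v, huv⟩ := hcd
  obtain ⟨A, hA⟩ : φ c ∣ P := hc
  obtain ⟨B, hB⟩ : φ d ∣ P := hd
  refine ⟨φ u * B + φ v * A, ?_⟩
  calc P = φ u * (φ c * P) + φ v * (φ d * P) := by
        rw [← mul_assoc, ← mul_assoc, ← map_mul, ← map_mul, ← add_mul, ← map_add, huv,
          map_one, one_mul]
    _ = φ u * (φ c * (φ d * B)) + φ v * (φ d * (φ c * A)) := by rw [← hA, ← hB]
    _ = φ (c * d) * (φ u * B + φ v * A) := by
      rw [mul_add]
      congr 1 <;> simp only [← mul_assoc, ← map_mul] <;> congr 2 <;> ring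

theorem Polynomial.map_prod_dvd_of_pairwise_isCoprime {ι : Type*} (s : Finset ι) {c : ι → F[X]}
    (hcop : (s : Set ι).Pairwise (IsCoprime on c)) {P : Q[X]}
    (hdvd : ∀ i ∈ s, (c i).map (algebraMap F Q) ∣ P) :
    (∏ i ∈ s, c i).map (algebraMap F Q) ∣ P := by
  classical
  induction s using Finset.induction_on with
  | empty => simp
  | insert j s hj ih =>
    rw [Finset.prod_insert hj]
    refine map_mul_dvd_of_isCoprime (IsCoprime.prod_right fun i hi => ?_)
      (hdvd j (Finset.mem_insert_self j s))
      (ih (hcop.mono (by simp)) fun i hi => hdvd i (Finset.mem_insert_of_mem hi))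
    exact hcop (by simp) (by simp [hi]) (by rintro rfl; exact hj hi)

end CentralCoefficients

section DivisionRing

variable {F Q : Type*} [CommSemiring F] [DivisionRing Q] [Algebra F Q]

theorem Polynomial.aeval_mul_mul_inv (p : F[X]) (q : Q) {g : Q} (hg : g ≠ 0) :
    aeval (g * q * g⁻¹) p = g * aeval q p * g⁻¹ :=
  aeval_algHom_apply (MulSemiringAction.toAlgEquiv F Q (ConjAct.toConjAct (Units.mk0 g hg))) q p

theorem Polynomial.eq_zero_of_degree_lt_two_of_forall_conj {q w : Q} (hqw : ¬Commute q w)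
    {R : Q[X]} (hR : R.degree < 2) (hroot : ∀ g : Q, g ≠ 0 → R.eval (g * q * g⁻¹) = 0) :
    R = 0 := by
  rw [eq_X_add_C_of_degree_le_one (Order.le_of_lt_succ hR)] at hroot ⊢
  simp only [eval_add, eval_C_mul, eval_X, eval_C] at hroot
  have hq := hroot 1 one_ne_zero
  rw [one_mul, inv_one, mul_one] at hq
  have hw0 : w ≠ 0 := by rintro rfl; exact hqw (Commute.zero_right q)
  obtain h1 | h1 := eq_or_ne (R.coeff 1) 0
  · rw [h1, zero_mul, zero_add] at hq
    rw [h1, hq, C_0, zero_mul, add_zero]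
  · have hconj : w * q * w⁻¹ = q :=
      mul_left_cancel₀ h1 (add_right_cancel ((hroot w hw0).trans hq.symm))
    exact absurd ((mul_inv_eq_iff_eq_mul₀ hw0).mp hconj).symm hqw

theorem Polynomial.map_dvd_of_forall_conj {p : F[X]} (hp : p.Monic) (hdeg : p.natDegree ≤ 2)
    {q w : Q} (hq : aeval q p = 0) (hqw : ¬Commute q w) {P : Q[X]}
    (hP : ∀ g : Q, g ≠ 0 → P.eval (g * q * g⁻¹) = 0) : p.map (algebraMap F Q) ∣ P := by
  have hmap : (p.map (algebraMap F Q)).Monic := hp.map _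
  rw [← modByMonic_eq_zero_iff_dvd hmap]
  refine eq_zero_of_degree_lt_two_of_forall_conj hqw ?_ fun g hg => ?_
  · exact (degree_modByMonic_lt P hmap).trans_le
      (degree_map_le.trans (degree_le_of_natDegree_le hdeg))
  · have h := hP g hg
    rwa [← modByMonic_add_div P (p.map (algebraMap F Q)), eval_add, eval_map_algebraMap_mul,
      aeval_mul_mul_inv p q hg, hq, mul_zero, zero_mul, mul_zero, add_zero] at h

theorem exists_conj_eq_of_aeval_eq_zero {p : F[X]} (hp : p.Monic) (hdeg : p.natDegree = 2)
    {a b w : Q} (ha : aeval a p = 0) (hb : aeval b p = 0) (hbw : ¬Commute b w) :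
    ∃ g : Q, g ≠ 0 ∧ b = g * a * g⁻¹ := by
  rw [aeval_eq_of_monic_of_natDegree_eq_two hp hdeg] at ha hb
  set c := p.coeff 1
  set d := p.coeff 0
  by_contra! hconj
  -- every nonzero `x = b * z + z * a + c • z` satisfies `b * x = x * a`
  have hzero (z : Q) : b * z + z * a + c • z = 0 := by
    by_contra hx
    refine hconj _ hx ((eq_mul_inv_iff_mul_eq₀ hx).mpr (sub_eq_zero.mp ?_))
    calc b * (b * z + z * a + c • z) - (b * z + z * a + c • z) * a
        = (b ^ 2 + c • b + d • 1) * z - z * (a ^ 2 + c • a + d • 1) := by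
          simp only [pow_two, mul_add, add_mul, mul_assoc, smul_mul_assoc, mul_smul_comm,
            one_mul, mul_one]
          abel
      _ = 0 := by rw [ha, hb, zero_mul, mul_zero, sub_zero]
  have hb1 : b = -a - c • 1 := by
    have := hzero 1
    rw [mul_one, one_mul, add_right_comm] at this
    rw [eq_sub_iff_add_eq, eq_neg_iff_add_eq_zero, this]
  have haw : a * w = w * a := by
    have h := hzero w
    rw [hb1, sub_mul, neg_mul, smul_mul_assoc, one_mul] at h
    exact neg_add_eq_zero.mp (by rw [← h]; abel)
  apply hbw
  rw [Commute, SemiconjBy, hb1, sub_mul, mul_sub, neg_mul, mul_neg, haw, smul_mul_assoc,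
    mul_smul_comm, one_mul, mul_one]

theorem eq_zero_of_sq_eq_add_mul {q u v w : Q} (hqu : Commute q u) (hqv : Commute q v)
    (hqw : ¬Commute q w) (h : q ^ 2 = v + u * w) : u = 0 := by
  by_contra hu
  refine hqw (mul_left_cancel₀ hu ?_)
  have hcomm := (Commute.self_pow q 2).eq
  rw [h, mul_add, add_mul, hqv.eq, ← mul_assoc, hqu.eq, mul_assoc, mul_assoc] at hcomm
  exact add_left_cancel hcomm

end DivisionRing

section CentralDivisionAlgebra

variable {F Q : Type*} [Field F] [DivisionRing Q] [Algebra F Q] {q w : Q}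

theorem exists_not_commute_of_not_mem_range
    (hcent : ∀ z : Q, (∀ w : Q, z * w = w * z) → ∃ r : F, z = algebraMap F Q r)
    (hq : ¬∃ r : F, q = algebraMap F Q r) : ∃ w, ¬Commute q w := by
  by_contra! h
  exact hq (hcent q h)

theorem linearIndependent_one_self (hq : ¬∃ r : F, q = algebraMap F Q r) :
    LinearIndependent F ![1, q] :=
  (LinearIndependent.pair_iff' one_ne_zero).2 fun r hr =>
    hq ⟨r, by rw [← hr, Algebra.algebraMap_eq_smul_one]⟩

theorem commute_smul_one_add_smul (q : Q) (s t : F) : Commute q (s • 1 + t • q) :=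
  ((Commute.one_right q).smul_right s).add_right ((Commute.refl q).smul_right t)

theorem eq_zero_of_smul_add_smul_add_mul_eq_zero (hq : ¬∃ r : F, q = algebraMap F Q r)
    (hqw : ¬Commute q w) {a b c d : F} (h : a • 1 + b • q + (c • 1 + d • q) * w = 0) :
    a = 0 ∧ b = 0 ∧ c = 0 ∧ d = 0 := by
  have hli := (LinearIndependent.pair_iff (R := F) (x := (1 : Q)) (y := q)).1
    (linearIndependent_one_self hq)
  have hu : c • (1 : Q) + d • q = 0 := by
    by_contra hu
    have hw : w = (c • 1 + d • q)⁻¹ * -(a • 1 + b • q) := by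
      rw [neg_eq_of_add_eq_zero_right h, inv_mul_cancel_left₀ hu]
    rw [hw] at hqw
    exact hqw ((commute_smul_one_add_smul q c d).inv_right₀.mul_right
      (commute_smul_one_add_smul q a b).neg_right)
  rw [hu, zero_mul, add_zero] at h
  exact ⟨(hli a b h).1, (hli a b h).2, (hli c d hu).1, (hli c d hu).2⟩

theorem sum_smul_one_self_left_mul (g : Fin 4 → F) :
    ∑ i, g i • ![1, q, w, q * w] i = g 0 • 1 + g 1 • q + (g 2 • 1 + g 3 • q) * w := by
  rw [Fin.sum_univ_four]
  simp only [Matrix.cons_val, add_mul, smul_mul_assoc, one_mul, ← add_assoc]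

theorem linearIndependent_one_self_left_mul (hq : ¬∃ r : F, q = algebraMap F Q r)
    (hqw : ¬Commute q w) : LinearIndependent F ![1, q, w, q * w] := by
  rw [Fintype.linearIndependent_iff]
  intro g hg
  rw [sum_smul_one_self_left_mul] at hg
  obtain ⟨h0, h1, h2, h3⟩ := eq_zero_of_smul_add_smul_add_mul_eq_zero hq hqw hg
  intro i
  fin_cases i
  exacts [h0, h1, h2, h3]

theorem exists_sq_eq_smul_add_smul_one [FiniteDimensional F Q] (hdim : Module.finrank F Q = 4)
    (hcent : ∀ z : Q, (∀ w : Q, z * w = w * z) → ∃ r : F, z = algebraMap F Q r)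
    (hq : ¬∃ r : F, q = algebraMap F Q r) : ∃ t n : F, q ^ 2 = t • q + n • 1 := by
  obtain ⟨w, hqw⟩ := exists_not_commute_of_not_mem_range hcent hq
  have hspan := (linearIndependent_one_self_left_mul hq hqw).span_eq_top_of_card_eq_finrank'
    (by rw [hdim, Fintype.card_fin])
  obtain ⟨g, hg⟩ := (Submodule.mem_span_range_iff_exists_fun F).1
    (hspan ▸ Submodule.mem_top : q ^ 2 ∈ Submodule.span F _)
  rw [sum_smul_one_self_left_mul] at hg
  have hu := eq_zero_of_sq_eq_add_mul (commute_smul_one_add_smul q _ _)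
    (commute_smul_one_add_smul q _ _) hqw hg.symm
  exact ⟨g 1, g 0, by rw [← hg, hu, zero_mul, add_zero, add_comm]⟩

theorem natDegree_minpoly_eq_two [FiniteDimensional F Q] (hdim : Module.finrank F Q = 4)
    (hcent : ∀ z : Q, (∀ w : Q, z * w = w * z) → ∃ r : F, z = algebraMap F Q r)
    (hq : ¬∃ r : F, q = algebraMap F Q r) : (minpoly F q).natDegree = 2 := by
  obtain ⟨t, n, hsq⟩ := exists_sq_eq_smul_add_smul_one hdim hcent hq
  refine le_antisymm ?_ ((minpoly.two_le_natDegree_iff (.of_finite F q)).2 ?_)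
  · have hp : (X ^ 2 - C t * X - C n : F[X]).Monic := by monicity!
    have hroot : aeval q (X ^ 2 - C t * X - C n) = 0 := by simp [hsq, Algebra.smul_def]
    calc (minpoly F q).natDegree ≤ (X ^ 2 - C t * X - C n : F[X]).natDegree :=
          natDegree_le_of_dvd (minpoly.dvd F q hroot) hp.ne_zero
      _ = 2 := by compute_degree!
  · rintro ⟨r, hr⟩
    exact hq ⟨r, hr.symm⟩

theorem isCoprime_minpoly_of_not_conj [FiniteDimensional F Q] (hdim : Module.finrank F Q = 4)
    (hcent : ∀ z : Q, (∀ w : Q, z * w = w * z) → ∃ r : F, z = algebraMap F Q r)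
    {a b : Q} (ha : ¬∃ r : F, a = algebraMap F Q r) (hb : ¬∃ r : F, b = algebraMap F Q r)
    (hab : ¬∃ g : Q, g ≠ 0 ∧ b = g * a * g⁻¹) : IsCoprime (minpoly F a) (minpoly F b) := by
  have hdega := natDegree_minpoly_eq_two hdim hcent ha
  rw [(minpoly.irreducible (.of_finite F a)).coprime_iff_not_dvd]
  intro hdvd
  have heq : minpoly F b = minpoly F a :=
    eq_of_monic_of_dvd_of_natDegree_le (minpoly.monic (.of_finite F a))
      (minpoly.monic (.of_finite F b)) hdvd
      (by rw [hdega, natDegree_minpoly_eq_two hdim hcent hb])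
  obtain ⟨w, hbw⟩ := exists_not_commute_of_not_mem_range hcent hb
  exact hab (exists_conj_eq_of_aeval_eq_zero (minpoly.monic (.of_finite F a)) hdega
    (minpoly.aeval F a) (heq ▸ minpoly.aeval F b) hbw)

theorem IsSphericalRoot.map_minpoly_dvd [FiniteDimensional F Q]
    (hdim : Module.finrank F Q = 4)
    (hcent : ∀ z : Q, (∀ w : Q, z * w = w * z) → ∃ r : F, z = algebraMap F Q r)
    {P : Q[X]} (h : IsSphericalRoot F P q) : (minpoly F q).map (algebraMap F Q) ∣ P := by
  obtain ⟨w, hqw⟩ := exists_not_commute_of_not_mem_range hcent h.1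
  exact map_dvd_of_forall_conj (minpoly.monic (.of_finite F q))
    (natDegree_minpoly_eq_two hdim hcent h.1).le (minpoly.aeval F q) hqw h.2

end CentralDivisionAlgebra

/-- If a monic polynomial of even degree `n` over a quaternion division algebra has
exactly `n/2` distinct conjugacy classes of spherical roots, then all its coefficients
lie in the center `F`. -/
theorem stmt15 {F Q : Type*} [Field F] [DivisionRing Q] [Algebra F Q]
    [FiniteDimensional F Q] (hdim : Module.finrank F Q = 4)
    (hcent : ∀ z : Q, (∀ w : Q, z * w = w * z) → ∃ r : F, z = algebraMap F Q r)
    (P : Q[X]) (hmonic : P.Monic) (heven : Even P.natDegree)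
    (a : Fin (P.natDegree / 2) → Q)
    (hsph : ∀ i, IsSphericalRoot F P (a i))
    (hpair : ∀ i j, i ≠ j → ¬∃ q : Q, q ≠ 0 ∧ a j = q * a i * q⁻¹) :
    ∀ k : ℕ, ∃ r : F, P.coeff k = algebraMap F Q r := by
  set M : F[X] := ∏ i, minpoly F (a i)
  have hM : M.Monic := monic_prod_of_monic _ _ fun i _ => minpoly.monic (.of_finite F (a i))
  have hdvd : M.map (algebraMap F Q) ∣ P :=
    map_prod_dvd_of_pairwise_isCoprime _
      (fun i _ j _ hij => isCoprime_minpoly_of_not_conj hdim hcent (hsph i).1 (hsph j).1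
        (hpair i j hij))
      fun i _ => (hsph i).map_minpoly_dvd hdim hcent
  have hdeg : M.natDegree = P.natDegree := by
    rw [natDegree_prod_of_monic _ _ fun i _ => minpoly.monic (.of_finite F (a i))]
    simp only [fun i => natDegree_minpoly_eq_two hdim hcent (hsph i).1, Finset.sum_const,
      Finset.card_univ, Fintype.card_fin, smul_eq_mul, Nat.div_mul_cancel heven.two_dvd]
  have hP : P = M.map (algebraMap F Q) :=
    eq_of_monic_of_dvd_of_natDegree_le (hM.map _) hmonic hdvd
      (by rw [natDegree_map_eq_of_injective (algebraMap F Q).injective, hdeg])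
  intro k
  exact ⟨M.coeff k, by rw [hP, coeff_map]⟩
end

section
/- Let Q be a quaternion division algebra over F and P(x) = x³ + ax² + bx + c ∈ Q[x]. If the coefficients a, b, c do not all lie in a common maximal subfield of Q, then P(x) has no spherical roots. -/
/-!
A non-central `q` generates a quadratic subfield `F(q)` of `Q`, so `q² = s + t q` with
`s, t ∈ F`, and every conjugate of `q` satisfies the same relation. Reducing the cubic modulo it,
`P(z) = α z + β` on the whole conjugacy class of `q`, with `α, β` polynomials in `a` over `F`.
Since `q` is non-central, its conjugates are not all fixed, which forces `α = β = 0`; this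
expresses `b` and `c` in `F[a]`, a maximal subfield unless `a` is central, in which case `F(q)`
contains all three coefficients.
-/

open Polynomial

open Module

theorem Subalgebra.finrank_dvd_finrank {F Q : Type*} [Field F] [DivisionRing Q] [Algebra F Q]
    [FiniteDimensional F Q] (K : Subalgebra F Q) : finrank F K ∣ finrank F Q :=
  let := divisionRingOfFiniteDimensional F K
  ⟨_, (finrank_mul_finrank F K Q).symm⟩

theorem adjoin_singleton_ne_top {F Q : Type*} [CommSemiring F] [Semiring Q] [Algebra F Q]
    [Algebra.IsCentral F Q] {q : Q} (hq : q ∉ (⊥ : Subalgebra F Q)) :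
    Algebra.adjoin F {q} ≠ ⊤ := fun htop ↦
  hq <| Algebra.IsCentral.out <| Subalgebra.mem_center_iff.2 fun w ↦
    (Algebra.commute_of_mem_adjoin_self (htop ▸ Algebra.mem_top : w ∈ Algebra.adjoin F {q})).symm

theorem finrank_adjoin_singleton_eq_two {F Q : Type*} [Field F] [DivisionRing Q] [Algebra F Q]
    [FiniteDimensional F Q] [Algebra.IsCentral F Q] (hdim : finrank F Q = 4) {q : Q}
    (hq : q ∉ (⊥ : Subalgebra F Q)) : finrank F (Algebra.adjoin F {q}) = 2 := by
  set K := Algebra.adjoin F {q}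
  have hdvd : finrank F K ∣ 4 := hdim ▸ K.finrank_dvd_finrank
  have hne_one : finrank F K ≠ 1 := fun h ↦
    hq (Subalgebra.eq_bot_of_finrank_one h ▸ Algebra.self_mem_adjoin_singleton F q)
  have hne_four : finrank F K ≠ 4 := fun h ↦ adjoin_singleton_ne_top hq <|
    Algebra.toSubmodule_eq_top.1 <|
      Submodule.eq_top_of_finrank_eq (K.finrank_toSubmodule.trans (h.trans hdim.symm))
  have hpos : 0 < finrank F K := finrank_pos
  have hle : finrank F K ≤ 4 := Nat.le_of_dvd (by norm_num) hdvd
  interval_cases h : finrank F K <;> simp_all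

theorem exists_sq_eq_of_finrank_adjoin_eq_two {F Q : Type*} [Field F] [Ring Q] [Algebra F Q]
    {q : Q} (hq : q ∉ (⊥ : Subalgebra F Q)) (h2 : finrank F (Algebra.adjoin F {q}) = 2) :
    ∃ s t : F, q ^ 2 = algebraMap F Q s + algebraMap F Q t * q := by
  set K := Algebra.adjoin F {q}
  have : FiniteDimensional F K := .of_finrank_pos (h2 ▸ two_pos)
  have : Nontrivial K := Module.nontrivial_of_finrank_pos (R := F) (h2 ▸ two_pos)
  let x : K := ⟨q, Algebra.self_mem_adjoin_singleton F q⟩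
  have hli : LinearIndependent F ![1, x] :=
    (LinearIndependent.pair_iff' one_ne_zero).2 fun r hr ↦
      hq (Algebra.mem_bot.2 ⟨r, by simpa [x, Algebra.smul_def] using congrArg Subtype.val hr⟩)
  have hspan : Submodule.span F {1, x} = ⊤ := by
    rw [← Matrix.range_cons_cons_empty 1 x ![]]
    exact hli.span_eq_top_of_card_eq_finrank (by simp [h2])
  obtain ⟨s, t, hst⟩ := Submodule.mem_span_pair.1 (hspan ▸ Submodule.mem_top : x ^ 2 ∈ _)
  exact ⟨s, t, by simpa [x, Algebra.smul_def] using (congrArg Subtype.val hst).symm⟩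

theorem conj_sq_eq_of_sq_eq {F Q : Type*} [CommSemiring F] [DivisionRing Q] [Algebra F Q]
    {q g : Q} (hg : g ≠ 0) {s t : F} (h : q ^ 2 = algebraMap F Q s + algebraMap F Q t * q) :
    (g * q * g⁻¹) ^ 2 = algebraMap F Q s + algebraMap F Q t * (g * q * g⁻¹) := by
  have hconj : ∀ r : F, g * algebraMap F Q r * g⁻¹ = algebraMap F Q r := fun r ↦ by
    rw [← Algebra.commutes, mul_assoc, mul_inv_cancel₀ hg, mul_one]
  calc (g * q * g⁻¹) ^ 2 = g * q ^ 2 * g⁻¹ := by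
        simp only [sq, mul_assoc, inv_mul_cancel_left₀ hg]
    _ = g * algebraMap F Q s * g⁻¹ + g * algebraMap F Q t * g⁻¹ * (g * q * g⁻¹) := by
        simp only [h, mul_add, add_mul, mul_assoc, inv_mul_cancel_left₀ hg]
    _ = _ := by rw [hconj, hconj]

theorem cubic_eq_of_sq_eq {F Q : Type*} [CommSemiring F] [Ring Q] [Algebra F Q]
    {z : Q} {s t : F} (h : z ^ 2 = algebraMap F Q s + algebraMap F Q t * z) (a b c : Q) :
    z ^ 3 + a * z ^ 2 + b * z + c =
      (algebraMap F Q s + algebraMap F Q t * algebraMap F Q t + a * algebraMap F Q t + b) * z +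
        (algebraMap F Q t * algebraMap F Q s + a * algebraMap F Q s + c) := by
  have h3 : z ^ 3 = algebraMap F Q s * z + algebraMap F Q t * z ^ 2 := by
    rw [pow_succ, h, add_mul, mul_assoc, ← sq, h]
  rw [h3, h]
  noncomm_ring

theorem eq_zero_of_forall_mul_conj_add_eq_zero {Q : Type*} [DivisionRing Q] {q α β : Q}
    (hq : q ∉ Subring.center Q) (h : ∀ g ≠ 0, α * (g * q * g⁻¹) + β = 0) : α = 0 ∧ β = 0 := by
  have hα : α = 0 := by
    by_contra hα
    refine hq (Subring.mem_center_iff.2 fun g ↦ ?_)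
    rcases eq_or_ne g 0 with rfl | hg
    · simp
    have hfix : g * q * g⁻¹ = q := mul_left_cancel₀ hα <| add_right_cancel <|
      (h g hg).trans (by simpa using (h 1 one_ne_zero).symm)
    calc g * q = g * q * g⁻¹ * g := by rw [mul_assoc _ g⁻¹, inv_mul_cancel₀ hg, mul_one]
      _ = q * g := by rw [hfix]
  exact ⟨hα, by simpa [hα] using h 1 one_ne_zero⟩

theorem IsSphericalRoot.notMem_bot {F Q : Type*} [Field F] [DivisionRing Q] [Algebra F Q]
    {P : Q[X]} {q : Q} (hroot : IsSphericalRoot F P q) : q ∉ (⊥ : Subalgebra F Q) := fun hq ↦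
  hroot.1 <| (Algebra.mem_bot.1 hq).imp fun _ hr ↦ hr.symm

theorem IsSphericalRoot.mem_adjoin_of_cubic {F Q : Type*} [Field F] [DivisionRing Q]
    [Algebra F Q] [FiniteDimensional F Q] [Algebra.IsCentral F Q] (hdim : finrank F Q = 4)
    {a b c q : Q} (hroot : IsSphericalRoot F (X ^ 3 + C a * X ^ 2 + C b * X + C c) q) :
    b ∈ Algebra.adjoin F {a} ∧ c ∈ Algebra.adjoin F {a} := by
  have hq := hroot.notMem_bot
  obtain ⟨s, t, hsq⟩ :=
    exists_sq_eq_of_finrank_adjoin_eq_two hq (finrank_adjoin_singleton_eq_two hdim hq)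
  have hlin : ∀ g ≠ 0, (algebraMap F Q s + algebraMap F Q t * algebraMap F Q t +
      a * algebraMap F Q t + b) * (g * q * g⁻¹) +
      (algebraMap F Q t * algebraMap F Q s + a * algebraMap F Q s + c) = 0 := fun g hg ↦ by
    rw [← cubic_eq_of_sq_eq (conj_sq_eq_of_sq_eq hg hsq), ← hroot.2 g hg]
    simp only [eval_add, eval_mul_X_pow, eval_C, eval_mul_X, eval_X_pow]
  have hq_center : q ∉ Subring.center Q := fun hc ↦
    hq (Algebra.IsCentral.out (Subalgebra.mem_center_iff.2 (Subring.mem_center_iff.1 hc)))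
  obtain ⟨hα, hβ⟩ := eq_zero_of_forall_mul_conj_add_eq_zero hq_center hlin
  have hF : ∀ r : F, algebraMap F Q r ∈ Algebra.adjoin F {a} := Subalgebra.algebraMap_mem _
  have ha : a ∈ Algebra.adjoin F {a} := Algebra.self_mem_adjoin_singleton F a
  constructor
  · rw [eq_neg_of_add_eq_zero_right hα]
    exact neg_mem (add_mem (add_mem (hF s) (mul_mem (hF t) (hF t))) (mul_mem ha (hF t)))
  · rw [eq_neg_of_add_eq_zero_right hβ]
    exact neg_mem (add_mem (mul_mem (hF t) (hF s)) (mul_mem ha (hF s)))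

theorem exists_notMem_bot_adjoin_le {F Q : Type*} [CommSemiring F] [Semiring Q] [Algebra F Q]
    {q : Q} (hq : q ∉ (⊥ : Subalgebra F Q)) (a : Q) :
    ∃ d ∉ (⊥ : Subalgebra F Q), Algebra.adjoin F {a} ≤ Algebra.adjoin F {d} := by
  by_cases ha : a ∈ (⊥ : Subalgebra F Q)
  · exact ⟨q, hq, Algebra.adjoin_singleton_le ((bot_le : ⊥ ≤ Algebra.adjoin F {q}) ha)⟩
  · exact ⟨a, ha, le_rfl⟩

/-- If the coefficients `a, b, c` of `x³ + ax² + bx + c` over a quaternion division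
algebra do not all lie in a common maximal subfield `F(d)` (`d` non-central), then the
polynomial has no spherical roots. -/
theorem stmt16 {F Q : Type*} [Field F] [DivisionRing Q] [Algebra F Q]
    [FiniteDimensional F Q] (hdim : Module.finrank F Q = 4)
    (hcent : ∀ z : Q, (∀ w : Q, z * w = w * z) → ∃ r : F, z = algebraMap F Q r)
    (a b c : Q)
    (h : ¬∃ d : Q, (¬∃ r : F, d = algebraMap F Q r) ∧
      a ∈ Algebra.adjoin F {d} ∧ b ∈ Algebra.adjoin F {d} ∧ c ∈ Algebra.adjoin F {d}) :
    ¬∃ q : Q, IsSphericalRoot F (X ^ 3 + C a * X ^ 2 + C b * X + C c) q := by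
  rintro ⟨q, hroot⟩
  have : Algebra.IsCentral F Q := ⟨fun z hz ↦ by
    obtain ⟨r, rfl⟩ := hcent z fun w ↦ (Subalgebra.mem_center_iff.1 hz w).symm
    exact Subalgebra.algebraMap_mem ⊥ r⟩
  obtain ⟨hb, hc⟩ := hroot.mem_adjoin_of_cubic hdim
  obtain ⟨d, hd, hle⟩ := exists_notMem_bot_adjoin_le hroot.notMem_bot a
  exact h ⟨d, fun ⟨r, hr⟩ ↦ hd (hr ▸ Subalgebra.algebraMap_mem ⊥ r),
    hle (Algebra.self_mem_adjoin_singleton F a), hle hb, hle hc⟩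
end

section
/- Let H be the Hamiltonian quaternions and P(x) = xⁿ + aₙ₋₁xⁿ⁻¹ + ⋯ + a₀ ∈ H[x] a monic polynomial all of whose coefficients lie in ℝ except exactly one coefficient aₘ ∉ ℝ (0 ≤ m < n). Then P(x) has no spherical roots. -/
/-!
For a spherical root `q` and any `g ≠ 0`, both `P (g q g⁻¹)` and `g P(q) g⁻¹` vanish, and their
difference is `∑ (aᵢ g - g aᵢ) qⁱ g⁻¹`. Real coefficients commute with `g`, so only the term
`(aₘ g - g aₘ) qᵐ g⁻¹` survives; as `q ≠ 0`, `aₘ` commutes with every quaternion, hence lies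
in the center `ℝ` of `ℍ`.
-/

open Polynomial

namespace Quaternion

theorem eq_re_of_forall_commute {R : Type*} [CommRing R] [IsAddTorsionFree R] {a : ℍ[R]}
    (h : ∀ g : ℍ[R], Commute a g) : a = a.re := by
  obtain ⟨-, -, hK, hJ⟩ := Quaternion.ext_iff.1 (h ⟨0, 1, 0, 0⟩).eq
  obtain ⟨-, -, -, hI⟩ := Quaternion.ext_iff.1 (h ⟨0, 0, 1, 0⟩).eq
  -- `erw`: the projections are those of `ℍ[R,-1,0,-1]`, which `ℍ[R]` unfolds to
  erw [imJ_mul, imJ_mul] at hK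
  erw [imK_mul, imK_mul] at hJ hI
  simp [self_eq_neg, neg_eq_self] at hI hJ hK
  ext <;> simp [hI, hJ, hK]

end Quaternion

namespace Polynomial

variable {K : Type*} [DivisionRing K]

theorem eval_conj_sub_conj_eval (P : K[X]) {g : K} (hg : g ≠ 0) (q : K) :
    P.eval (g * q * g⁻¹) - g * P.eval q * g⁻¹ =
      ∑ i ∈ Finset.range (P.natDegree + 1), (P.coeff i * g - g * P.coeff i) * (q ^ i * g⁻¹) := by
  have hpow (i : ℕ) : (g * q * g⁻¹) ^ i = g * q ^ i * g⁻¹ := by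
    simpa using GroupWithZero.conj_pow₀ (inv_ne_zero hg) (d := q) (s := i)
  simp only [eval_eq_sum_range, hpow, Finset.mul_sum, Finset.sum_mul, ← Finset.sum_sub_distrib]
  refine Finset.sum_congr rfl fun i _ => ?_
  noncomm_ring

theorem commute_coeff_of_eval_conj_eq_zero {P : K[X]} {q g : K} (m : ℕ) (hq : q ≠ 0)
    (hg : g ≠ 0) (hcoeff : ∀ i ≠ m, Commute (P.coeff i) g) (hroot : P.eval q = 0)
    (hconj : P.eval (g * q * g⁻¹) = 0) : Commute (P.coeff m) g := by
  have hsum := P.eval_conj_sub_conj_eval hg q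
  rw [hroot, hconj, mul_zero, zero_mul, sub_zero, Finset.sum_eq_single m] at hsum
  · exact sub_eq_zero.1 <| (mul_eq_zero.1 hsum.symm).resolve_right
      (mul_ne_zero (pow_ne_zero _ hq) (inv_ne_zero hg))
  · intro i _ hi
    rw [(hcoeff i hi).eq, sub_self, zero_mul]
  · intro hm
    rw [coeff_eq_zero_of_natDegree_lt (by simpa using hm)]
    simp

end Polynomial

theorem stmt18_general (m : ℕ) (P : Polynomial (Quaternion ℝ))
    (hre : ∀ i : ℕ, i ≠ m → ∃ r : ℝ, P.coeff i = algebraMap ℝ (Quaternion ℝ) r)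
    (hnotre : ¬∃ r : ℝ, P.coeff m = algebraMap ℝ (Quaternion ℝ) r) :
    ¬∃ q : Quaternion ℝ, IsSphericalRoot ℝ P q := by
  rintro ⟨q, hq_nonreal, hq_roots⟩
  have hq : q ≠ 0 := fun h => hq_nonreal ⟨0, by simp [h]⟩
  have hroot : P.eval q = 0 := by simpa using hq_roots 1 one_ne_zero
  have hreal_comm (i : ℕ) (hi : i ≠ m) (g : Quaternion ℝ) : Commute (P.coeff i) g := by
    obtain ⟨r, hr⟩ := hre i hi
    exact hr ▸ Algebra.commute_algebraMap_left r g
  refine hnotre ⟨_, Quaternion.eq_re_of_forall_commute fun g => ?_⟩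
  rcases eq_or_ne g 0 with rfl | hg
  · exact Commute.zero_right _
  · exact commute_coeff_of_eval_conj_eq_zero m hq hg (fun i hi => hreal_comm i hi g) hroot
      (hq_roots g hg)

/-- A monic polynomial of degree `n` over the Hamiltonian quaternions, all of whose
coefficients are real except exactly one coefficient `aₘ ∉ ℝ` with `m < n`, has no
spherical roots. -/
theorem stmt18 (n m : ℕ) (hmn : m < n) (P : Polynomial (Quaternion ℝ))
    (hmonic : P.Monic) (hdeg : P.natDegree = n)
    (hre : ∀ i : ℕ, i ≠ m → ∃ r : ℝ, P.coeff i = algebraMap ℝ (Quaternion ℝ) r)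
    (hnotre : ¬∃ r : ℝ, P.coeff m = algebraMap ℝ (Quaternion ℝ) r) :
    ¬∃ q : Quaternion ℝ, IsSphericalRoot ℝ P q :=
  stmt18_general m P hre hnotre
end

section
/- Let H be the Hamiltonian quaternions and P(x) = xⁿ + ⋯ ∈ H[x] a monic polynomial whose coefficients all lie in ℝ except possibly aₖ and aₘ with k > m, where aₖ, aₘ ∉ ℝ and aₖ ∈ ℝ(aₘ) (they lie in a common maximal subfield). If k = m + 1, then P(x) has no spherical roots; in general P(x) has at most (k−m)/2 distinct conjugacy classes of spherical roots. -/
/-!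
Write a non-real quaternion as `q = x + y u` with `y > 0` and `u² = -1`; its conjugacy class is
the sphere `x + y S²`, labelled by `z = x + y i ∈ ℂ`. Since `(x + y w)ⁱ = Re zⁱ + Im zⁱ w` for every
`w ∈ S²`, we get `P(x + y w) = A + B w` with `A = Σ Re zⁱ aᵢ` and `B = Σ Im zⁱ aᵢ` independent of
`w`, so a spherical root forces `A = B = 0`. All `aᵢ` are real except `aₖ, aₘ`, and
`Im aₖ = t Im aₘ` because `aₖ` commutes with `aₘ`; taking imaginary parts of `A` and `B` gives
`t zᵏ + zᵐ = 0`, so `z` is a root of the real polynomial `t X^(k-m) + 1`. Distinct classes give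
distinct `z` in the upper half-plane, and together with their conjugates these are `2j` distinct
roots of a polynomial of degree at most `k - m`.
-/

open Polynomial

open Quaternion

namespace Quaternion

theorem exists_algebraMap_eq_iff_im_eq_zero {x : ℍ} :
    (∃ r : ℝ, x = algebraMap ℝ ℍ r) ↔ x.im = 0 := by
  refine ⟨fun ⟨r, hr⟩ => hr ▸ im_coe r, fun h => ⟨x.re, ?_⟩⟩
  rw [algebraMap_def, ← re_add_im x, h, add_zero, re_coe]

theorem im_sum {ι : Type*} (s : Finset ι) (f : ι → ℍ) :
    (∑ i ∈ s, f i).im = ∑ i ∈ s, (f i).im :=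
  map_sum (AddMonoidHom.mk' im im_add) f s

theorem mul_self_eq_neg_normSq {v : ℍ} (hv : v.re = 0) : v * v = -((normSq v : ℝ) : ℍ) := by
  rw [← sq, sq_eq_neg_normSq.2 hv]

theorem exists_ne_zero_mul_eq_neg_mul {v : ℍ} (hv : v.re = 0) : ∃ g ≠ 0, g * v = -v * g := by
  -- any pure quaternion orthogonal to `v` anticommutes with it
  by_cases h : v.imI = 0 ∧ v.imJ = 0
  · obtain ⟨g, g0, g1, g2, g3⟩ : ∃ g : ℍ, g.re = 0 ∧ g.imI = 1 ∧ g.imJ = 0 ∧ g.imK = 0 :=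
      ⟨⟨0, 1, 0, 0⟩, rfl, rfl, rfl, rfl⟩
    refine ⟨g, fun h0 => by simp [h0] at g1, ?_⟩
    ext <;> simp [re_mul, imI_mul, imJ_mul, imK_mul, hv, h.1, h.2, g0, g1, g2, g3]
  · obtain ⟨g, g0, g1, g2, g3⟩ : ∃ g : ℍ, g.re = 0 ∧ g.imI = v.imJ ∧ g.imJ = -v.imI ∧ g.imK = 0 :=
      ⟨⟨0, v.imJ, -v.imI, 0⟩, rfl, rfl, rfl, rfl⟩
    refine ⟨g, fun h0 => h ?_, ?_⟩
    · subst h0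
      simp only [imI_zero, imJ_zero, zero_eq_neg] at g1 g2
      exact ⟨g2, g1.symm⟩
    · ext <;> simp [re_mul, imI_mul, imJ_mul, imK_mul, hv, g0, g1, g2, g3] <;> ring

theorem exists_ne_zero_mul_eq_mul_of_normSq_eq {v w : ℍ} (hv : v.re = 0) (hw : w.re = 0)
    (h : normSq v = normSq w) : ∃ g ≠ 0, g * v = w * g := by
  by_cases hvw : v + w = 0
  · rw [eq_neg_of_add_eq_zero_right hvw]
    exact exists_ne_zero_mul_eq_neg_mul hv
  · -- `v² = w²`, so `(v + w) v = v² + w v = w (v + w)`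
    refine ⟨v + w, hvw, ?_⟩
    rw [add_mul, mul_add, mul_self_eq_neg_normSq hv, mul_self_eq_neg_normSq hw, h]
    abel

theorem exists_conj_of_re_eq_of_norm_im_eq {q q' : ℍ} (hre : q.re = q'.re)
    (him : ‖q.im‖ = ‖q'.im‖) : ∃ g ≠ 0, q' = g * q * g⁻¹ := by
  obtain ⟨g, hg, hgq⟩ := exists_ne_zero_mul_eq_mul_of_normSq_eq (re_im q) (re_im q')
    (by rw [normSq_eq_norm_mul_self, normSq_eq_norm_mul_self, him])
  refine ⟨g, hg, ?_⟩
  rw [eq_mul_inv_iff_mul_eq₀ hg, ← re_add_im q, ← re_add_im q', mul_add, add_mul, hgq, hre,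
    coe_commutes]

theorem im_eq_sub_re (x : ℍ) : x.im = x - x.re := eq_sub_of_add_eq' (re_add_im x)

theorem exists_im_eq_smul_im_of_commute {x y : ℍ} (h : Commute x y) (hy : y.im ≠ 0) :
    ∃ t : ℝ, x.im = t • y.im := by
  have him : Commute x.im y.im := by
    rw [im_eq_sub_re x, im_eq_sub_re y]
    exact (h.sub_right (coe_commute _ _).symm).sub_left (coe_commute _ _)
  -- a product of commuting pure quaternions is fixed by `star`, hence real
  have hreal : x.im * y.im = ((x.im * y.im).re : ℍ) := by
    rw [← star_eq_self, star_mul, star_eq_neg.2 (re_im x), star_eq_neg.2 (re_im y), neg_mul_neg]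
    exact him.eq.symm
  have key : (x.im * y.im).re • y.im = -normSq y.im • x.im := by
    rw [← coe_mul_eq_smul, ← hreal, mul_assoc, mul_self_eq_neg_normSq (re_im y), mul_neg,
      mul_coe_eq_smul, neg_smul]
  refine ⟨-(x.im * y.im).re / normSq y.im, ?_⟩
  rw [div_eq_inv_mul, mul_smul, neg_smul, key, neg_smul, neg_neg, smul_smul,
    inv_mul_cancel₀ (normSq_ne_zero.2 hy), one_smul]

noncomputable def conjClassRep (q : ℍ) : ℂ := ⟨q.re, ‖q.im‖⟩

theorem exists_conj_of_conjClassRep_eq {q q' : ℍ} (h : conjClassRep q = conjClassRep q') :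
    ∃ g ≠ 0, q' = g * q * g⁻¹ :=
  exists_conj_of_re_eq_of_norm_im_eq (congrArg Complex.re h) (congrArg Complex.im h)

theorem eval_re_add_im_smul (P : Polynomial ℍ) {u : ℍ} (hu : u * u = -1) (z : ℂ) :
    P.eval (z.re + z.im • u) =
      (P.sum fun e a => (z ^ e).re • a) + (P.sum fun e a => (z ^ e).im • a) * u := by
  have hpow (e : ℕ) : ((z.re : ℍ) + z.im • u) ^ e = (z ^ e).re + (z ^ e).im • u := by
    simpa [Complex.lift_apply, Complex.liftAux_apply, algebraMap_def] using
      (map_pow (Complex.lift ⟨u, hu⟩) z e).symm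
  rw [eval_eq_sum, sum_def, sum_def, sum_def, Finset.sum_mul, ← Finset.sum_add_distrib]
  refine Finset.sum_congr rfl fun e _ => ?_
  rw [hpow, mul_add, mul_coe_eq_smul, mul_smul_comm, smul_mul_assoc]

theorem im_sum_smul_coeff {P : Polynomial ℍ} {k m : ℕ} (hkm : k ≠ m)
    (hre : ∀ i, i ≠ k → i ≠ m → (P.coeff i).im = 0) (c : ℕ → ℝ) :
    (P.sum fun e a => c e • a).im = c k • (P.coeff k).im + c m • (P.coeff m).im := by
  rw [sum_def, im_sum]
  simp only [im_smul]
  refine Finset.sum_eq_add k m hkm (fun i _ hi => by rw [hre i hi.1 hi.2, smul_zero]) ?_ ?_ <;>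
    exact fun h => by rw [notMem_support_iff.1 h, im_zero, smul_zero]

end Quaternion

namespace IsSphericalRoot

variable {P : Polynomial ℍ} {q : ℍ}

theorem im_ne_zero (hq : IsSphericalRoot ℝ P q) : q.im ≠ 0 :=
  mt exists_algebraMap_eq_iff_im_eq_zero.2 hq.1

theorem conjClassRep_im_pos (hq : IsSphericalRoot ℝ P q) : 0 < (conjClassRep q).im :=
  norm_pos_iff.2 hq.im_ne_zero

theorem sum_smul_coeff_eq_zero (hq : IsSphericalRoot ℝ P q) :
    (P.sum fun e a => (conjClassRep q ^ e).re • a) = 0 ∧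
      (P.sum fun e a => (conjClassRep q ^ e).im • a) = 0 := by
  have hb : ‖q.im‖ ≠ 0 := norm_ne_zero_iff.2 hq.im_ne_zero
  set u := ‖q.im‖⁻¹ • q.im
  have hu : u * u = -1 := by
    rw [smul_mul_smul_comm, mul_self_eq_neg_normSq (re_im q), normSq_eq_norm_mul_self, smul_neg,
      smul_coe, ← mul_inv, inv_mul_cancel₀ (mul_ne_zero hb hb), Quaternion.coe_one]
  have hu' : -u * -u = -1 := by rwa [neg_mul_neg]
  have hq_eq : q = (conjClassRep q).re + (conjClassRep q).im • u := by
    simp [conjClassRep, u, smul_smul, hb]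
  have hstar_eq : star q = (conjClassRep q).re + (conjClassRep q).im • -u := by
    rw [← re_add_im (star q), re_star, im_star]
    simp [conjClassRep, u, smul_smul, hb]
  have h1 : P.eval q = 0 := by simpa using hq.2 1 one_ne_zero
  have h2 : P.eval (star q) = 0 := by
    obtain ⟨g, hg, hgq⟩ := exists_conj_of_re_eq_of_norm_im_eq (q' := star q) (re_star q).symm
      (by rw [im_star, norm_neg])
    rw [hgq]
    exact hq.2 g hg
  rw [hq_eq, eval_re_add_im_smul P hu] at h1
  rw [hstar_eq, eval_re_add_im_smul P hu', mul_neg, ← sub_eq_add_neg] at h2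
  set A := P.sum fun e a => (conjClassRep q ^ e).re • a
  set B := P.sum fun e a => (conjClassRep q ^ e).im • a
  have hA : A = 0 := by
    have : (2 : ℝ) • A = 0 :=
      calc (2 : ℝ) • A = (A + B * u) + (A - B * u) := by rw [two_smul]; abel
        _ = 0 := by rw [h1, h2, add_zero]
    exact (smul_eq_zero.1 this).resolve_left two_ne_zero
  have hu0 : u ≠ 0 := smul_ne_zero (inv_ne_zero hb) hq.im_ne_zero
  exact ⟨hA, (mul_eq_zero.1 (show B * u = 0 by rwa [hA, zero_add] at h1)).resolve_right hu0⟩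

theorem mul_pow_add_pow_eq_zero {k m : ℕ} (hkm : k ≠ m)
    (hre : ∀ i, i ≠ k → i ≠ m → (P.coeff i).im = 0) {t : ℝ}
    (ht : (P.coeff k).im = t • (P.coeff m).im) (hm : (P.coeff m).im ≠ 0)
    (hq : IsSphericalRoot ℝ P q) :
    t * conjClassRep q ^ k + conjClassRep q ^ m = 0 := by
  have key (c : ℕ → ℝ) (hc : (P.sum fun e a => c e • a) = 0) : c k * t + c m = 0 := by
    have := congrArg im hc
    rw [im_sum_smul_coeff hkm hre, ht, smul_smul, ← add_smul, im_zero] at this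
    exact (smul_eq_zero.1 this).resolve_right hm
  have hRe := key _ hq.sum_smul_coeff_eq_zero.1
  have hIm := key _ hq.sum_smul_coeff_eq_zero.2
  apply Complex.ext <;> simp <;> linarith

theorem aeval_C_mul_X_pow_sub_add_one_eq_zero {k m : ℕ} (hmk : m < k)
    (hre : ∀ i, i ≠ k → i ≠ m → (P.coeff i).im = 0) {t : ℝ}
    (ht : (P.coeff k).im = t • (P.coeff m).im) (hm : (P.coeff m).im ≠ 0)
    (hq : IsSphericalRoot ℝ P q) :
    aeval (conjClassRep q) (C t * X ^ (k - m) + 1) = 0 := by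
  have hz : conjClassRep q ^ m ≠ 0 :=
    pow_ne_zero _ fun h => (hq.conjClassRep_im_pos.ne' (by rw [h, Complex.zero_im]))
  have h := hq.mul_pow_add_pow_eq_zero hmk.ne' hre ht hm
  rw [← Nat.sub_add_cancel hmk.le, pow_add] at h
  refine (mul_eq_zero.1 ?_).resolve_right hz
  simpa [add_mul, mul_assoc] using h

end IsSphericalRoot

theorem Polynomial.two_mul_card_le_natDegree {p : ℝ[X]} (hp : p ≠ 0) {s : Finset ℂ}
    (hs : ∀ z ∈ s, 0 < z.im ∧ aeval z p = 0) : 2 * s.card ≤ p.natDegree := by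
  classical
  have hroots : s ∪ s.image (starRingEnd ℂ) ⊆ (p.map (algebraMap ℝ ℂ)).roots.toFinset := by
    intro z hz
    rw [Multiset.mem_toFinset, mem_roots (Polynomial.map_ne_zero hp), IsRoot, eval_map_algebraMap]
    rcases Finset.mem_union.1 hz with hz | hz
    · exact (hs z hz).2
    · obtain ⟨w, hw, rfl⟩ := Finset.mem_image.1 hz
      rw [aeval_conj, (hs w hw).2, map_zero]
  have hdisj : Disjoint s (s.image (starRingEnd ℂ)) := by
    refine Finset.disjoint_right.2 fun z hz hz' => ?_
    obtain ⟨w, hw, rfl⟩ := Finset.mem_image.1 hz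
    have := (hs w hw).1
    have := (hs _ hz').1
    rw [Complex.conj_im] at this
    linarith
  calc 2 * s.card = (s ∪ s.image (starRingEnd ℂ)).card := by
        rw [Finset.card_union_of_disjoint hdisj,
          Finset.card_image_of_injective _ (RingHom.injective _), two_mul]
    _ ≤ (p.map (algebraMap ℝ ℂ)).roots.toFinset.card := Finset.card_le_card hroots
    _ ≤ Multiset.card (p.map (algebraMap ℝ ℂ)).roots := Multiset.toFinset_card_le _
    _ ≤ (p.map (algebraMap ℝ ℂ)).natDegree := card_roots' _
    _ = p.natDegree := natDegree_map _

theorem stmt19_general (k m : ℕ) (hmk : m < k)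
    (P : Polynomial (Quaternion ℝ))
    (hre : ∀ i : ℕ, i ≠ k → i ≠ m → ∃ r : ℝ, P.coeff i = algebraMap ℝ (Quaternion ℝ) r)
    (hmnotre : ¬∃ r : ℝ, P.coeff m = algebraMap ℝ (Quaternion ℝ) r)
    (hsub : P.coeff k ∈ Algebra.adjoin ℝ ({P.coeff m} : Set (Quaternion ℝ))) :
    (k = m + 1 → ¬∃ q : Quaternion ℝ, IsSphericalRoot ℝ P q) ∧
    ∀ (j : ℕ) (a : Fin j → Quaternion ℝ),
      (∀ i, IsSphericalRoot ℝ P (a i)) →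
      (∀ i i', i ≠ i' → ¬∃ g : Quaternion ℝ, g ≠ 0 ∧ a i' = g * a i * g⁻¹) →
      2 * j ≤ k - m := by
  have hre' i (hk : i ≠ k) (hm : i ≠ m) : (P.coeff i).im = 0 :=
    exists_algebraMap_eq_iff_im_eq_zero.1 (hre i hk hm)
  have hm : (P.coeff m).im ≠ 0 := mt exists_algebraMap_eq_iff_im_eq_zero.2 hmnotre
  obtain ⟨t, ht⟩ :=
    exists_im_eq_smul_im_of_commute (Algebra.commute_of_mem_adjoin_self hsub).symm hm
  have hcount (j : ℕ) (a : Fin j → ℍ) (hsph : ∀ i, IsSphericalRoot ℝ P (a i))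
      (hpair : ∀ i i', i ≠ i' → ¬∃ g : ℍ, g ≠ 0 ∧ a i' = g * a i * g⁻¹) : 2 * j ≤ k - m := by
    have hinj : Function.Injective (conjClassRep ∘ a) := fun i i' h =>
      by_contra fun hne => hpair i i' hne (exists_conj_of_conjClassRep_eq h)
    have hp : (C t * X ^ (k - m) + 1 : ℝ[X]) ≠ 0 := fun h => by
      simpa [Nat.sub_ne_zero_of_lt hmk] using congrArg (eval 0) h
    calc 2 * j = 2 * (Finset.univ.image (conjClassRep ∘ a)).card := by
          rw [Finset.card_image_of_injective _ hinj, Finset.card_univ, Fintype.card_fin]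
      _ ≤ (C t * X ^ (k - m) + 1 : ℝ[X]).natDegree := by
          refine two_mul_card_le_natDegree hp fun z hz => ?_
          obtain ⟨i, -, rfl⟩ := Finset.mem_image.1 hz
          exact ⟨(hsph i).conjClassRep_im_pos,
            (hsph i).aeval_C_mul_X_pow_sub_add_one_eq_zero hmk hre' ht hm⟩
      _ ≤ k - m := by compute_degree
  refine ⟨fun hk ⟨q, hq⟩ => ?_, hcount⟩
  have := hcount 1 (fun _ => q) (fun _ => hq) fun i i' h => absurd (Subsingleton.elim i i') h
  omega

/-- A monic polynomial of degree `n` over the Hamiltonian quaternions whose coefficients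
are all real except possibly `aₖ, aₘ` (`k > m`), where `aₖ, aₘ ∉ ℝ` lie in a common
maximal subfield (`aₖ ∈ ℝ(aₘ)`), has no spherical roots if `k = m + 1`, and in general
has at most `(k − m)/2` distinct conjugacy classes of spherical roots. -/
theorem stmt19 (n k m : ℕ) (hmk : m < k) (hkn : k < n)
    (P : Polynomial (Quaternion ℝ)) (hmonic : P.Monic) (hdeg : P.natDegree = n)
    (hre : ∀ i : ℕ, i ≠ k → i ≠ m → ∃ r : ℝ, P.coeff i = algebraMap ℝ (Quaternion ℝ) r)
    (hknotre : ¬∃ r : ℝ, P.coeff k = algebraMap ℝ (Quaternion ℝ) r)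
    (hmnotre : ¬∃ r : ℝ, P.coeff m = algebraMap ℝ (Quaternion ℝ) r)
    (hsub : P.coeff k ∈ Algebra.adjoin ℝ ({P.coeff m} : Set (Quaternion ℝ))) :
    (k = m + 1 → ¬∃ q : Quaternion ℝ, IsSphericalRoot ℝ P q) ∧
    ∀ (j : ℕ) (a : Fin j → Quaternion ℝ),
      (∀ i, IsSphericalRoot ℝ P (a i)) →
      (∀ i i', i ≠ i' → ¬∃ g : Quaternion ℝ, g ≠ 0 ∧ a i' = g * a i * g⁻¹) →
      2 * j ≤ k - m :=
  stmt19_general k m hmk P hre hmnotre hsub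
end
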